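/- arXiv:1805.03611 — 2 statements merged into one kernel-verified Lean document; each statement's English description precedes it below -/
import Mathlib

section
/- Let A be an abelian group and let M be a finitely generated additive submonoid of A. Let B denote the subgroup of A generated by M in A, and define the saturation M^sat := {a ∈ B : there exists an integer n ≥ 1 with n·a ∈ M}. Then M^sat is a finitely generated submonoid of A. -/
/-!
Write `M` as the closure of finitely many `w i` and `B` for the group they generate. If
`n • a = ∑ c i • w i` with `a ∈ B`, then dividing each `c i` by `n` with remainder splits `a` as
`∑ (c i / n) • w i ∈ M` plus an element `d ∈ B` with `n • d = ∑ (c i % n) • w i`. Such `d` are the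
points of `B` in the half-open parallelepiped spanned by the `w i`; since `B` is a finitely
generated abelian group, its free coordinates are bounded there and its torsion is finite, so there
are only finitely many of them, and together with the `w i` they generate the saturation.
-/

open Set Function

section FractionalCombinations

variable {G H ι : Type*} [AddCommGroup G] [AddCommGroup H] [Fintype ι]

def fractionalCombinations (w : ι → G) : Set G :=
  {g | ∃ n : ℕ, 0 < n ∧ ∃ c : ι → ℕ, (∀ i, c i < n) ∧ n • g = ∑ i, c i • w i}

theorem map_mem_fractionalCombinations (f : G →+ H) {w : ι → G} {g : G}
    (hg : g ∈ fractionalCombinations w) : f g ∈ fractionalCombinations (f ∘ w) := by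
  obtain ⟨n, hn, c, hc, h⟩ := hg
  exact ⟨n, hn, c, hc, by simpa [map_nsmul, map_sum] using congrArg f h⟩

theorem map_mem_fractionalCombinations_iff {f : G →+ H} (hf : Injective f) {w : ι → G} {g : G} :
    f g ∈ fractionalCombinations (f ∘ w) ↔ g ∈ fractionalCombinations w := by
  refine ⟨fun ⟨n, hn, c, hc, h⟩ ↦ ⟨n, hn, c, hc, hf ?_⟩, map_mem_fractionalCombinations f⟩
  simpa [map_nsmul, map_sum] using h

theorem Int.abs_le_of_mem_fractionalCombinations {w : ι → ℤ} {x : ℤ}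
    (hx : x ∈ fractionalCombinations w) : |x| ≤ ∑ i, |w i| := by
  obtain ⟨n, hn, c, hc, h⟩ := hx
  have : (n : ℤ) * |x| ≤ n * ∑ i, |w i| :=
    calc (n : ℤ) * |x| = |∑ i, (c i : ℤ) * w i| := by
          simp only [nsmul_eq_mul] at h
          rw [← h, abs_mul, Nat.abs_cast]
      _ ≤ ∑ i, |(c i : ℤ) * w i| := Finset.abs_sum_le_sum_abs _ _
      _ ≤ ∑ i, (n : ℤ) * |w i| := Finset.sum_le_sum fun i _ ↦ by
          rw [abs_mul, Nat.abs_cast]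
          gcongr
          exact (hc i).le
      _ = n * ∑ i, |w i| := (Finset.mul_sum ..).symm
  exact le_of_mul_le_mul_left this (by exact_mod_cast hn)

theorem Int.finite_fractionalCombinations (w : ι → ℤ) : (fractionalCombinations w).Finite :=
  (finite_Icc _ _).subset fun _ hx ↦ abs_le.mp (Int.abs_le_of_mem_fractionalCombinations hx)

theorem finite_fractionalCombinations [AddGroup.FG G] (w : ι → G) :
    (fractionalCombinations w).Finite := by
  obtain ⟨d, κ, _, p, hp, e, ⟨f⟩⟩ := AddCommGroup.equiv_free_prod_directSum_zmod G
  have : Finite (DirectSum κ fun i ↦ ZMod (p i ^ e i)) := by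
    have (i : κ) : NeZero (p i ^ e i) := ⟨pow_ne_zero _ (hp i).ne_zero⟩
    exact Finite.of_injective _ DFunLike.coe_injective
  let coord (j : Fin d) : G →+ ℤ :=
    (Finsupp.applyAddHom j).comp ((AddMonoidHom.fst _ _).comp f.toAddMonoidHom)
  let φ (g : G) := ((fun j ↦ coord j g), (f g).2)
  have hφ : Injective φ := fun g g' h ↦ by
    simp only [φ, Prod.mk.injEq, funext_iff] at h
    exact f.injective (Prod.ext (Finsupp.ext h.1) h.2)
  refine (((Finite.pi fun j ↦ Int.finite_fractionalCombinations (coord j ∘ w)).prod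
    finite_univ).preimage hφ.injOn).subset fun g hg ↦ ?_
  exact ⟨fun j _ ↦ map_mem_fractionalCombinations (coord j) hg, trivial⟩

end FractionalCombinations

theorem AddSubgroup.closure_addSubmonoidClosure {A : Type*} [AddGroup A] (s : Set A) :
    closure (AddSubmonoid.closure s : Set A) = closure s :=
  le_antisymm
    (closure_le _ |>.mpr <| AddSubmonoid.closure_le.mpr (subset_closure (k := s)))
    (closure_mono AddSubmonoid.subset_closure)

namespace AddSubmonoid

variable {A : Type*} [AddCommGroup A]

def nsmulSaturation (M : AddSubmonoid A) : AddSubmonoid A where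
  carrier := {a | a ∈ AddSubgroup.closure (M : Set A) ∧ ∃ n : ℕ, 1 ≤ n ∧ n • a ∈ M}
  zero_mem' := ⟨zero_mem _, 1, le_rfl, by simp⟩
  add_mem' := by
    rintro a b ⟨haB, m, hm, hma⟩ ⟨hbB, n, hn, hnb⟩
    refine ⟨add_mem haB hbB, m * n, Nat.one_le_iff_ne_zero.mpr (by positivity), ?_⟩
    rw [smul_add, mul_nsmul, mul_nsmul']
    exact add_mem (nsmul_mem hma n) (nsmul_mem hnb m)

theorem le_nsmulSaturation (M : AddSubmonoid A) : M ≤ M.nsmulSaturation :=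
  fun _ ha ↦ ⟨AddSubgroup.subset_closure ha, 1, le_rfl, by simpa using ha⟩

theorem nsmulSaturation_closure_range {ι : Type*} [Fintype ι] (w : ι → A) :
    (closure (range w)).nsmulSaturation =
      closure (range w ∪ fractionalCombinations w ∩ AddSubgroup.closure (range w)) := by
  have hB := AddSubgroup.closure_addSubmonoidClosure (range w)
  apply le_antisymm
  · rintro a ⟨haB, n, hn, hna⟩
    obtain ⟨c, hc⟩ := mem_closure_range_iff_of_fintype.mp hna
    set t := ∑ i, (c i / n) • w i
    have ht : t ∈ closure (range w) := mem_closure_range_iff_of_fintype.mpr ⟨_, rfl⟩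
    have hsplit : n • a = n • t + ∑ i, (c i % n) • w i := by
      rw [hc, Finset.smul_sum, ← Finset.sum_add_distrib]
      refine Finset.sum_congr rfl fun i _ ↦ ?_
      rw [← mul_nsmul', ← add_nsmul, Nat.div_add_mod]
    have hrem : a - t ∈ fractionalCombinations w ∩ AddSubgroup.closure (range w) :=
      ⟨⟨n, hn, _, fun i ↦ Nat.mod_lt _ hn, by rw [smul_sub, hsplit, add_sub_cancel_left]⟩,
        hB ▸ sub_mem haB (AddSubgroup.subset_closure ht)⟩
    rw [← add_sub_cancel t a]
    exact add_mem (closure_mono subset_union_left ht) (subset_closure (Or.inr hrem))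
  · rw [closure_le, union_subset_iff]
    refine ⟨fun _ hx ↦ le_nsmulSaturation _ (subset_closure hx), ?_⟩
    rintro a ⟨⟨n, hn, c, -, hna⟩, haB⟩
    exact ⟨hB ▸ haB, n, hn, hna ▸ mem_closure_range_iff_of_fintype.mpr ⟨c, rfl⟩⟩

theorem FG.nsmulSaturation {M : AddSubmonoid A} (hM : M.FG) : M.nsmulSaturation.FG := by
  obtain ⟨s, rfl⟩ := hM
  rw [← Subtype.range_coe (s := (s : Set A)), nsmulSaturation_closure_range, fg_iff]
  refine ⟨_, rfl, (finite_range _).union ?_⟩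
  set B := AddSubgroup.closure (range (Subtype.val : ↥(s : Set A) → A))
  let w (i : ↥(s : Set A)) : B := ⟨i, AddSubgroup.subset_closure (mem_range_self i)⟩
  refine ((finite_fractionalCombinations w).image B.subtype).subset ?_
  rintro a ⟨ha, haB⟩
  exact ⟨⟨a, haB⟩, (map_mem_fractionalCombinations_iff B.subtype_injective).mp ha, rfl⟩

end AddSubmonoid

/-- Gordon's lemma: if `M` is a finitely generated submonoid of an abelian group `A`,
`B` is the subgroup of `A` generated by `M`, and
`M^sat = {a ∈ B : n • a ∈ M for some integer n ≥ 1}`, then `M^sat` is a finitely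
generated submonoid of `A`. -/
theorem stmt_4 {A : Type*} [AddCommGroup A] (M : AddSubmonoid A) (hM : M.FG) :
    ∃ N : AddSubmonoid A,
      (N : Set A) =
        {a : A | a ∈ AddSubgroup.closure (M : Set A) ∧ ∃ n : ℕ, 1 ≤ n ∧ n • a ∈ M} ∧
      N.FG :=
  ⟨M.nsmulSaturation, rfl, hM.nsmulSaturation⟩
end

section
/- Let K be a field, V a finite-dimensional K-vector space, φ : V → V a K-linear endomorphism, and τ a nonzero element of K. Set ψ := id_V − τ·φ and suppose ker ψ ∩ im ψ = 0. Then: (1) ker ψ and im ψ are φ-stable and V = ker ψ ⊕ im ψ; (2) φ acts on ker ψ as multiplication by τ^{−1}; (3) the restriction of ψ to im ψ is an automorphism of im ψ, so that det(id − τ·φ|_{im ψ}) ≠ 0; and (4) in the polynomial ring K[t] one has the factorization det(id − t·φ) = (1 − τ^{−1}t)^r · det(id − t·φ|_{im ψ}), where r = dim_K ker ψ and det(id − t·φ) denotes the determinant of the K[t]-linear endomorphism id − t·φ of V ⊗_K K[t]. In particular, τ is a root of the polynomial det(id − t·φ) of multiplicity exactly r = dim_K ker(id − τ·φ). -/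
/-!
Since `ψ = 1 - τ φ` commutes with `φ`, its kernel and image are `φ`-stable, and rank–nullity
upgrades their disjointness to `V = ker ψ ⊕ im ψ`. The reverse characteristic polynomial
`det (1 - t φ)` is the reverse of the characteristic polynomial, so it is multiplicative
over `φ`-stable direct sums. On `ker ψ` the map `φ` is the scalar `τ⁻¹`, contributing
`(1 - τ⁻¹ t) ^ r`; the factor coming from `im ψ` takes the value `det (ψ|im ψ) ≠ 0` at
`t = τ`, so `τ` is a root of multiplicity exactly `r`.
-/

open Polynomial TensorProduct

namespace Matrix

variable {n R : Type*} [Fintype n] [DecidableEq n] [CommRing R]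

lemma eval_charpolyRev_eq_det (M : Matrix n n R) (a : R) :
    eval a M.charpolyRev = det (1 - a • M) := by
  rw [charpolyRev, ← coe_evalRingHom, RingHom.map_det]
  congr 1
  ext i j
  by_cases h : i = j <;> simp [h] <;> ring

lemma charpolyRev_smul_one (c : R) :
    (c • (1 : Matrix n n R)).charpolyRev = (1 - C c * X) ^ Fintype.card n := by
  have : (1 : Matrix n n R[X]) - (X : R[X]) • (c • (1 : Matrix n n R)).map C =
      (1 - C c * X) • 1 := by
    ext i j
    by_cases h : i = j <;> simp [h]
  rw [charpolyRev, this, det_smul, det_one, mul_one]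

end Matrix

namespace LinearMap

variable {R M : Type*} [CommRing R] [AddCommGroup M] [Module R M]

noncomputable def charpolyRev (f : M →ₗ[R] M) : R[X] :=
  LinearMap.det
    ((LinearMap.id : R[X] ⊗[R] M →ₗ[R[X]] R[X] ⊗[R] M) - (X : R[X]) • f.baseChange R[X])

lemma charpolyRev_eq_toMatrix_charpolyRev {ι : Type*} [Fintype ι] [DecidableEq ι]
    (b : Module.Basis ι R M) (f : M →ₗ[R] M) :
    f.charpolyRev = (toMatrix b b f).charpolyRev := by
  let B := Algebra.TensorProduct.basis R[X] b
  rw [charpolyRev, ← det_toMatrix B, _root_.map_sub (toMatrix B B),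
    _root_.map_smul (toMatrix B B), toMatrix_baseChange, toMatrix_id, Matrix.charpolyRev,
    Polynomial.algebraMap_eq]

section Free

variable [Module.Free R M] [Module.Finite R M]

lemma reverse_charpoly (f : M →ₗ[R] M) : f.charpoly.reverse = f.charpolyRev := by
  rw [charpolyRev_eq_toMatrix_charpolyRev (Module.Free.chooseBasis R M),
    ← Matrix.reverse_charpoly, charpoly_toMatrix]

lemma eval_charpolyRev (f : M →ₗ[R] M) (a : R) :
    eval a f.charpolyRev = LinearMap.det (LinearMap.id - a • f) := by
  let b := Module.Free.chooseBasis R M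
  rw [charpolyRev_eq_toMatrix_charpolyRev b, Matrix.eval_charpolyRev_eq_det, ← det_toMatrix b,
    _root_.map_sub, _root_.map_smul, toMatrix_id]

lemma charpolyRev_smul_id (c : R) :
    (c • LinearMap.id : M →ₗ[R] M).charpolyRev = (1 - C c * X) ^ Module.finrank R M := by
  nontriviality R
  let b := Module.Free.chooseBasis R M
  rw [charpolyRev_eq_toMatrix_charpolyRev b, _root_.map_smul, toMatrix_id,
    Matrix.charpolyRev_smul_one, Module.finrank_eq_card_basis b]

end Free

lemma mapsTo_ker_of_commute {f g : M →ₗ[R] M} (h : Commute f g) :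
    ∀ x ∈ ker g, f x ∈ ker g := fun x hx => by
  rw [mem_ker, ← Module.End.mul_apply, ← h.eq, Module.End.mul_apply, mem_ker.mp hx, map_zero]

lemma mapsTo_range_of_commute {f g : M →ₗ[R] M} (h : Commute f g) :
    ∀ x ∈ range g, f x ∈ range g := by
  rintro _ ⟨y, rfl⟩
  exact ⟨f y, by rw [← Module.End.mul_apply, ← h.eq, Module.End.mul_apply]⟩

variable {K V : Type*} [Field K] [AddCommGroup V] [Module K V] [FiniteDimensional K V]

lemma isCompl_ker_range_of_disjoint {f : V →ₗ[K] V} (h : Disjoint (ker f) (range f)) :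
    IsCompl (ker f) (range f) :=
  (Submodule.isCompl_iff_disjoint _ _ (by rw [add_comm, finrank_range_add_finrank_ker])).mpr h

lemma bijective_restrict_range_of_disjoint {f : V →ₗ[K] V} (h : Disjoint (ker f) (range f))
    (hf : ∀ x ∈ range f, f x ∈ range f) : Function.Bijective (f.restrict hf) := by
  have hinj : Function.Injective (f.restrict hf) := by
    rw [← ker_eq_bot, eq_bot_iff]
    rintro ⟨x, hx⟩ hx0
    exact Subtype.ext (Submodule.disjoint_def.mp h x (congrArg Subtype.val hx0) hx)
  exact ⟨hinj, injective_iff_surjective.mp hinj⟩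

lemma charpoly_eq_mul_of_isCompl {p q : Submodule K V} (h : IsCompl p q) (f : V →ₗ[K] V)
    (hp : ∀ x ∈ p, f x ∈ p) (hq : ∀ x ∈ q, f x ∈ q) :
    f.charpoly = (f.restrict hp).charpoly * (f.restrict hq).charpoly := by
  let e := Submodule.prodEquivOfIsCompl p q h
  have hconj : e.conj ((f.restrict hp).prodMap (f.restrict hq)) = f := by
    ext x
    obtain ⟨⟨y, z⟩, rfl⟩ := e.surjective x
    simp [e, LinearEquiv.conj_apply]
  rw [← charpoly_prodMap, ← e.charpoly_conj, hconj]

lemma charpolyRev_eq_mul_of_isCompl {p q : Submodule K V} (h : IsCompl p q) (f : V →ₗ[K] V)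
    (hp : ∀ x ∈ p, f x ∈ p) (hq : ∀ x ∈ q, f x ∈ q) :
    f.charpolyRev = (f.restrict hp).charpolyRev * (f.restrict hq).charpolyRev := by
  rw [← reverse_charpoly, ← reverse_charpoly, ← reverse_charpoly,
    charpoly_eq_mul_of_isCompl h f hp hq, reverse_mul_of_domain]

end LinearMap

lemma Polynomial.rootMultiplicity_one_sub_C_inv_mul_X_pow_mul {K : Type*} [Field K] {a : K}
    (ha : a ≠ 0) (n : ℕ) {p : K[X]} (hp : p.eval a ≠ 0) :
    rootMultiplicity a ((1 - C a⁻¹ * X) ^ n * p) = n := by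
  have hlin : (1 - C a⁻¹ * X : K[X]) = C (-a⁻¹) * (X - C a) := by
    rw [map_neg, neg_mul, mul_sub, ← C_mul, inv_mul_cancel₀ ha, C_1]
    ring
  have hq : (C (-a⁻¹) ^ n * p).eval a ≠ 0 := by
    simpa [ha] using hp
  have hq0 : C (-a⁻¹) ^ n * p ≠ 0 := fun h0 => hq (by rw [h0, eval_zero])
  rw [hlin, mul_pow, mul_right_comm, rootMultiplicity_mul_X_sub_C_pow hq0,
    rootMultiplicity_eq_zero hq, zero_add]

/-- Let `φ` be an endomorphism of a finite-dimensional `K`-vector space `V`, `τ ∈ K`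
nonzero and `ψ := id - τ • φ`, with `ker ψ ∩ im ψ = 0`.  Then `ker ψ` and `im ψ` are
`φ`-stable with `V = ker ψ ⊕ im ψ`; `φ` acts on `ker ψ` as `τ⁻¹`; `ψ` restricts to an
automorphism of `im ψ` (so `det(id - τ·φ|_{im ψ}) ≠ 0`); and the reverse characteristic
polynomial factors as
`det(id - t·φ) = (1 - τ⁻¹ t)^r · det(id - t·φ|_{im ψ})` with `r = dim ker ψ`, so that
`τ` is a root of `det(id - t·φ)` of multiplicity exactly `r`. -/
theorem stmt_8 {K V : Type*} [Field K] [AddCommGroup V] [Module K V]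
    [FiniteDimensional K V] (φ : V →ₗ[K] V) (τ : K) (hτ : τ ≠ 0)
    (ψ : V →ₗ[K] V) (hψ : ψ = LinearMap.id - τ • φ)
    (hdisj : Disjoint (LinearMap.ker ψ) (LinearMap.range ψ)) :
    (∀ x ∈ LinearMap.ker ψ, φ x ∈ LinearMap.ker ψ) ∧
    (∀ x ∈ LinearMap.range ψ, φ x ∈ LinearMap.range ψ) ∧
    IsCompl (LinearMap.ker ψ) (LinearMap.range ψ) ∧
    (∀ x ∈ LinearMap.ker ψ, φ x = τ⁻¹ • x) ∧
    ∀ (hst : ∀ x ∈ LinearMap.range ψ, φ x ∈ LinearMap.range ψ)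
      (hstψ : ∀ x ∈ LinearMap.range ψ, ψ x ∈ LinearMap.range ψ),
      Function.Bijective (ψ.restrict hstψ) ∧
      LinearMap.det (LinearMap.id - τ • φ.restrict hst) ≠ 0 ∧
      LinearMap.det
          ((LinearMap.id : K[X] ⊗[K] V →ₗ[K[X]] K[X] ⊗[K] V)
            - (X : K[X]) • LinearMap.baseChange K[X] φ) =
        (1 - C τ⁻¹ * X) ^ (Module.finrank K (LinearMap.ker ψ)) *
          LinearMap.det
            ((LinearMap.id :
                K[X] ⊗[K] ↥(LinearMap.range ψ) →ₗ[K[X]] K[X] ⊗[K] ↥(LinearMap.range ψ))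
              - (X : K[X]) • LinearMap.baseChange K[X] (φ.restrict hst)) ∧
      Polynomial.rootMultiplicity τ
          (LinearMap.det
            ((LinearMap.id : K[X] ⊗[K] V →ₗ[K[X]] K[X] ⊗[K] V)
              - (X : K[X]) • LinearMap.baseChange K[X] φ)) =
        Module.finrank K (LinearMap.ker ψ) := by
  have hcomm : Commute φ ψ := by
    rw [hψ]
    exact (Commute.one_right φ).sub_right ((Commute.refl φ).smul_right τ)
  have hker := LinearMap.mapsTo_ker_of_commute hcomm
  have hcompl := LinearMap.isCompl_ker_range_of_disjoint hdisj
  have hact : ∀ x ∈ LinearMap.ker ψ, φ x = τ⁻¹ • x := fun x hx => by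
    rw [LinearMap.mem_ker, hψ, LinearMap.sub_apply, sub_eq_zero, LinearMap.id_apply] at hx
    exact (eq_inv_smul_iff₀ hτ).mpr hx.symm
  refine ⟨hker, LinearMap.mapsTo_range_of_commute hcomm, hcompl, hact, fun hst hstψ => ?_⟩
  have hbij := LinearMap.bijective_restrict_range_of_disjoint hdisj hstψ
  have hrestrict : LinearMap.id - τ • φ.restrict hst = ψ.restrict hstψ := by
    ext x
    simp [hψ]
  have hdet : LinearMap.det (LinearMap.id - τ • φ.restrict hst) ≠ 0 :=
    hrestrict ▸ (LinearEquiv.ofBijective _ hbij).isUnit_det'.ne_zero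
  have hφker : φ.restrict hker = τ⁻¹ • LinearMap.id :=
    LinearMap.ext fun x => Subtype.ext (hact x x.2)
  have hfactor : φ.charpolyRev = (1 - C τ⁻¹ * X) ^ Module.finrank K (LinearMap.ker ψ) *
      (φ.restrict hst).charpolyRev := by
    rw [LinearMap.charpolyRev_eq_mul_of_isCompl hcompl φ hker hst, hφker,
      LinearMap.charpolyRev_smul_id]
  refine ⟨hbij, hdet, hfactor, ?_⟩
  rw [← LinearMap.charpolyRev, hfactor]
  exact rootMultiplicity_one_sub_C_inv_mul_X_pow_mul hτ _ (by rwa [LinearMap.eval_charpolyRev])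
end
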